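/- arXiv:1805.09480 — 7 statements merged into one kernel-verified Lean document; each statement's English description precedes it below -/
import Mathlib

section
/- If F : [0,1]ⁿ → ℝ is twice continuously differentiable, then F is continuous submodular (i.e., F(x) + F(y) ≥ F(x ∨ y) + F(x ∧ y) for all x, y, where ∨ and ∧ are coordinatewise max and min) if and only if all off-diagonal entries of the Hessian of F are nonpositive everywhere on (0,1)ⁿ. -/
/-!
Write `Δ_{u,v} F (a) = F (a + u + v) - F (a + u) - F (a + v) + F a`. Two applications of the mean
value theorem give `Δ_{u,v} F (a) = D²F(ξ) v u` for some `ξ = a + s u + t v`, `s, t ∈ (0, 1)`.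
If `u ⊓ v = 0` (nonnegative vectors with disjoint supports), then `(a + u) ⊔ (a + v) = a + u + v`
and `(a + u) ⊓ (a + v) = a`, so submodularity on such quadruples says exactly `Δ_{u,v} F (a) ≤ 0`,
while in `D²F(ξ) v u = ∑ v_j u_i ∂_j ∂_i F (ξ)` the diagonal terms vanish since `u_i v_i = 0`.
Taking `u = ε e_i`, `v = ε e_j` near a point where `∂_j ∂_i F > 0` gives one direction; writing
`x = p + u`, `y = p + v` with `p = x ⊓ y` gives the other. Continuity of the Hessian transfers the
sign condition between the open cube and the closed one.
-/

open Set

variable {E G : Type*} [NormedAddCommGroup E] [NormedSpace ℝ E] [NormedAddCommGroup G]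
  [NormedSpace ℝ G]

theorem HasFDerivAt.hasDerivAt_add_smul {g : E → G} {g' : E →L[ℝ] G} {a v : E} {t : ℝ}
    (hg : HasFDerivAt g g' (a + t • v)) : HasDerivAt (fun s : ℝ => g (a + s • v)) (g' v) t :=
  hg.comp_hasDerivAt t (((hasDerivAt_id t).smul_const v).const_add a |>.congr_deriv (one_smul ℝ v))

theorem hasFDerivAt_fderiv_apply {F : E → ℝ} {x : E} (hF : DifferentiableAt ℝ (fderiv ℝ F) x)
    (u : E) :
    HasFDerivAt (fun y => fderiv ℝ F y u) ((fderiv ℝ (fderiv ℝ F) x).flip u) x := by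
  simpa using hF.hasFDerivAt.clm_apply (hasFDerivAt_const u x)

theorem ContDiff.continuous_fderiv_fderiv_apply {F : E → ℝ} (hF : ContDiff ℝ 2 F) (u v : E) :
    Continuous fun z => fderiv ℝ (fderiv ℝ F) z u v :=
  (((hF.fderiv_right (m := 1) le_rfl).continuous_fderiv one_ne_zero).clm_apply
    continuous_const).clm_apply continuous_const

def mixedDiff {α : Type*} [Add α] (F : α → ℝ) (a u v : α) : ℝ :=
  F (a + u + v) - F (a + u) - F (a + v) + F a

theorem exists_mixedDiff_eq_fderiv_fderiv {F : E → ℝ} (hF : Differentiable ℝ F)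
    (hF' : Differentiable ℝ (fderiv ℝ F)) (a u v : E) :
    ∃ s ∈ Ioo (0 : ℝ) 1, ∃ t ∈ Ioo (0 : ℝ) 1,
      mixedDiff F a u v = fderiv ℝ (fderiv ℝ F) (a + s • u + t • v) v u := by
  have hφ : ∀ s : ℝ, HasDerivAt (fun s => F (a + v + s • u) - F (a + s • u))
      (fderiv ℝ F (a + v + s • u) u - fderiv ℝ F (a + s • u) u) s := fun s =>
    (hF _).hasFDerivAt.hasDerivAt_add_smul.sub (hF _).hasFDerivAt.hasDerivAt_add_smul
  obtain ⟨s, hs, hs_eq⟩ := exists_hasDerivAt_eq_slope _ _ zero_lt_one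
    (fun s _ => (hφ s).continuousAt.continuousWithinAt) (fun s _ => hφ s)
  have hψ : ∀ t : ℝ, HasDerivAt (fun t => fderiv ℝ F (a + s • u + t • v) u)
      (fderiv ℝ (fderiv ℝ F) (a + s • u + t • v) v u) t := fun t =>
    (hasFDerivAt_fderiv_apply (hF' _) u).hasDerivAt_add_smul
  obtain ⟨t, ht, ht_eq⟩ := exists_hasDerivAt_eq_slope _ _ zero_lt_one
    (fun t _ => (hψ t).continuousAt.continuousWithinAt) (fun t _ => hψ t)
  refine ⟨s, hs, t, ht, ?_⟩
  simp only [zero_smul, add_zero, one_smul, sub_zero, div_one] at hs_eq ht_eq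
  rw [ht_eq, add_right_comm a (s • u), hs_eq, mixedDiff, add_right_comm a u v]
  ring

section Lattice

variable {α : Type*} [AddCommGroup α] [Lattice α] [IsOrderedAddMonoid α]

theorem add_sup_add_of_inf_eq_zero {a u v : α} (h : u ⊓ v = 0) :
    (a + u) ⊔ (a + v) = a + u + v := by
  rw [← add_sup, ← zero_add (u ⊔ v), ← h, inf_add_sup, add_assoc]

theorem add_inf_add_of_inf_eq_zero {a u v : α} (h : u ⊓ v = 0) : (a + u) ⊓ (a + v) = a := by
  rw [← add_inf, h, add_zero]

theorem mixedDiff_eq_of_inf_eq_zero (F : α → ℝ) {a u v : α} (h : u ⊓ v = 0) :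
    mixedDiff F a u v =
      F ((a + u) ⊔ (a + v)) + F ((a + u) ⊓ (a + v)) - (F (a + u) + F (a + v)) := by
  rw [add_sup_add_of_inf_eq_zero h, add_inf_add_of_inf_eq_zero h, mixedDiff]
  ring

end Lattice

variable {ι : Type*}

theorem Pi.single_inf_single_of_ne [DecidableEq ι] {i j : ι} (hij : i ≠ j) {a b : ℝ}
    (ha : 0 ≤ a) (hb : 0 ≤ b) : Pi.single i a ⊓ Pi.single j b = (0 : ι → ℝ) := by
  ext k
  rcases eq_or_ne k i with rfl | hki
  · simp [hij, ha]
  · rcases eq_or_ne k j with rfl | hkj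
    · simp [hki, hb]
    · simp [hki, hkj]

theorem closure_univ_pi_Ioo_zero_one : closure (univ.pi fun _ : ι => Ioo (0 : ℝ) 1) = Icc 0 1 := by
  rw [closure_pi_set, ← pi_univ_Icc]
  simp only [closure_Ioo zero_ne_one, Pi.zero_apply, Pi.one_apply]

theorem nonpos_on_Icc_of_nonpos_on_univ_pi_Ioo {g : (ι → ℝ) → ℝ} (hg : Continuous g)
    (h : ∀ x ∈ univ.pi fun _ => Ioo (0 : ℝ) 1, g x ≤ 0) : ∀ x ∈ Icc (0 : ι → ℝ) 1, g x ≤ 0 := by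
  rw [← closure_univ_pi_Ioo_zero_one]
  exact closure_minimal h (isClosed_le hg continuous_const)

variable [Fintype ι] [DecidableEq ι]

theorem ContinuousLinearMap.apply_nonpos_of_inf_eq_zero
    (B : (ι → ℝ) →L[ℝ] (ι → ℝ) →L[ℝ] ℝ)
    (hB : ∀ i j, i ≠ j → B (Pi.single i 1) (Pi.single j 1) ≤ 0) {u v : ι → ℝ} (huv : u ⊓ v = 0) :
    B u v ≤ 0 := by
  have hu : 0 ≤ u := huv ▸ inf_le_left
  have hv : 0 ≤ v := huv ▸ inf_le_right
  rw [pi_eq_sum_univ' u, pi_eq_sum_univ' v]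
  simp only [map_sum, map_smul, FunLike.coe_sum, Finset.sum_apply, Finset.mul_sum,
    FunLike.coe_smul, Pi.smul_apply, smul_eq_mul]
  refine Finset.sum_nonpos fun j _ => Finset.sum_nonpos fun i _ => ?_
  rcases eq_or_ne i j with rfl | hij
  · have : min (u i) (v i) = 0 := congrFun huv i
    rcases min_choice (u i) (v i) with h | h <;> rw [h] at this <;> simp [this]
  · exact mul_nonpos_of_nonneg_of_nonpos (hv j) (mul_nonpos_of_nonneg_of_nonpos (hu i) (hB i j hij))

variable {F : (ι → ℝ) → ℝ}

theorem mixedDiff_nonpos_of_fderiv_fderiv_nonpos (hF : Differentiable ℝ F)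
    (hF' : Differentiable ℝ (fderiv ℝ F)) {a u v : ι → ℝ} (huv : u ⊓ v = 0)
    (hH : ∀ z ∈ Icc a (a + u + v), ∀ i j : ι, i ≠ j →
      fderiv ℝ (fderiv ℝ F) z (Pi.single j 1) (Pi.single i 1) ≤ 0) :
    mixedDiff F a u v ≤ 0 := by
  have hu : 0 ≤ u := huv ▸ inf_le_left
  have hv : 0 ≤ v := huv ▸ inf_le_right
  obtain ⟨s, hs, t, ht, h⟩ := exists_mixedDiff_eq_fderiv_fderiv hF hF' a u v
  have hz : a + s • u + t • v ∈ Icc a (a + u + v) := by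
    constructor
    · exact le_add_of_le_of_nonneg (le_add_of_nonneg_right (smul_nonneg hs.1.le hu))
        (smul_nonneg ht.1.le hv)
    · gcongr
      · exact smul_le_of_le_one_left hu hs.2.le
      · exact smul_le_of_le_one_left hv ht.2.le
  rw [h]
  exact (fderiv ℝ (fderiv ℝ F) _).apply_nonpos_of_inf_eq_zero
    (fun i j hij => hH _ hz j i hij.symm) (inf_comm u v ▸ huv)

theorem submodularOn_Icc_of_fderiv_fderiv_nonpos (hF : Differentiable ℝ F)
    (hF' : Differentiable ℝ (fderiv ℝ F)) {l r : ι → ℝ}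
    (hH : ∀ z ∈ Icc l r, ∀ i j : ι, i ≠ j →
      fderiv ℝ (fderiv ℝ F) z (Pi.single j 1) (Pi.single i 1) ≤ 0)
    {x y : ι → ℝ} (hx : x ∈ Icc l r) (hy : y ∈ Icc l r) :
    F (x ⊔ y) + F (x ⊓ y) ≤ F x + F y := by
  have huv : (x - x ⊓ y) ⊓ (y - x ⊓ y) = 0 := by rw [← inf_sub, sub_self]
  have hsup : x ⊓ y + (x - x ⊓ y) + (y - x ⊓ y) = x ⊔ y := by
    rw [← add_sup_add_of_inf_eq_zero huv, add_sub_cancel, add_sub_cancel]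
  have key := mixedDiff_nonpos_of_fderiv_fderiv_nonpos hF hF' huv fun z hz =>
    hH z ⟨(le_inf hx.1 hy.1).trans hz.1, (hz.2.trans_eq hsup).trans (sup_le hx.2 hy.2)⟩
  rw [mixedDiff_eq_of_inf_eq_zero F huv, add_sub_cancel, add_sub_cancel] at key
  linarith

theorem fderiv_fderiv_nonpos_of_submodularOn {U : Set (ι → ℝ)} (hU : IsOpen U)
    (hF : ContDiff ℝ 2 F) (hsub : ∀ x ∈ U, ∀ y ∈ U, F (x ⊔ y) + F (x ⊓ y) ≤ F x + F y)
    {x : ι → ℝ} (hx : x ∈ U) {i j : ι} (hij : i ≠ j) :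
    fderiv ℝ (fderiv ℝ F) x (Pi.single j 1) (Pi.single i 1) ≤ 0 := by
  set H : (ι → ℝ) → ℝ := fun z => fderiv ℝ (fderiv ℝ F) z (Pi.single j 1) (Pi.single i 1)
  by_contra! hpos
  obtain ⟨δ, hδ, hball⟩ := Metric.isOpen_iff.1
    (hU.inter (isOpen_lt continuous_const (hF.continuous_fderiv_fderiv_apply _ _))) x ⟨hx, hpos⟩
  obtain ⟨ε, hε, h2ε⟩ : ∃ ε > 0, 2 * ε < δ := ⟨δ / 3, by positivity, by linarith⟩
  have hnear : ∀ s ∈ Icc (0 : ℝ) 1, ∀ t ∈ Icc (0 : ℝ) 1,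
      x + s • Pi.single i ε + t • Pi.single j ε ∈ U ∩ {z | 0 < H z} := by
    intro s hs t ht
    refine hball (lt_of_le_of_lt ?_ h2ε)
    rw [dist_eq_norm, add_assoc, add_sub_cancel_left]
    refine (norm_add_le _ _).trans ?_
    simp only [norm_smul, Pi.norm_single, Real.norm_of_nonneg hε.le, Real.norm_of_nonneg hs.1,
      Real.norm_of_nonneg ht.1]
    nlinarith [hs.2, ht.2]
  obtain ⟨s, hs, t, ht, hdiff⟩ :=
    exists_mixedDiff_eq_fderiv_fderiv (hF.differentiable two_ne_zero)
      ((hF.fderiv_right (m := 1) le_rfl).differentiable one_ne_zero) x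
      (Pi.single i ε) (Pi.single j ε)
  have hsingle : ∀ k : ι, (Pi.single k ε : ι → ℝ) = ε • Pi.single k 1 := fun k => by
    rw [← Pi.single_smul, smul_eq_mul, mul_one]
  have hscale : ∀ z, fderiv ℝ (fderiv ℝ F) z (Pi.single j ε) (Pi.single i ε) = ε * (ε * H z) :=
    fun z => by simp only [H, hsingle, map_smul, FunLike.coe_smul, Pi.smul_apply,
      smul_eq_mul]
  have hpos' : 0 < mixedDiff F x (Pi.single i ε) (Pi.single j ε) := by
    rw [hdiff, hscale]
    exact mul_pos hε (mul_pos hε (hnear s (Ioo_subset_Icc_self hs) t (Ioo_subset_Icc_self ht)).2)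
  have hxu := (hnear 1 (right_mem_Icc.2 zero_le_one) 0 (left_mem_Icc.2 zero_le_one)).1
  have hxv := (hnear 0 (left_mem_Icc.2 zero_le_one) 1 (right_mem_Icc.2 zero_le_one)).1
  simp only [one_smul, zero_smul, add_zero] at hxu hxv
  have := hsub _ hxu _ hxv
  rw [mixedDiff_eq_of_inf_eq_zero F (Pi.single_inf_single_of_ne hij hε.le hε.le)] at hpos'
  linarith

theorem stmt_3 (n : ℕ) (F : (Fin n → ℝ) → ℝ) (hF : ContDiff ℝ 2 F) :
    (∀ x y : Fin n → ℝ, x ∈ Set.Icc (0:Fin n → ℝ) 1 → y ∈ Set.Icc (0:Fin n → ℝ) 1 →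
      F x + F y ≥ F (x ⊔ y) + F (x ⊓ y)) ↔
    (∀ x : Fin n → ℝ, x ∈ Set.Ioo (0:Fin n → ℝ) 1 → ∀ i j : Fin n, i ≠ j →
      fderiv ℝ (fun y => fderiv ℝ F y (Pi.single i 1)) x (Pi.single j 1) ≤ 0) := by
  have hF₁ : Differentiable ℝ F := hF.differentiable two_ne_zero
  have hF₂ : Differentiable ℝ (fderiv ℝ F) :=
    (hF.fderiv_right (m := 1) le_rfl).differentiable one_ne_zero
  simp only [fun x i => (hasFDerivAt_fderiv_apply (hF₂ x) (Pi.single i 1)).fderiv,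
    ContinuousLinearMap.flip_apply]
  -- `Set.Ioo 0 1` in the product order is the closed cube minus the corners `0` and `1`, not
  -- the open cube `univ.pi (Ioo 0 1)`; both directions pass through the open cube.
  have hcube : univ.pi (fun _ => Ioo (0 : ℝ) 1) ⊆ Icc (0 : Fin n → ℝ) 1 := by
    rw [← pi_univ_Icc]
    exact pi_mono fun _ _ => Ioo_subset_Icc_self
  constructor
  · intro hsub x hx i j hij
    refine nonpos_on_Icc_of_nonpos_on_univ_pi_Ioo (hF.continuous_fderiv_fderiv_apply _ _)
      (fun z hz => ?_) x (Ioo_subset_Icc_self hx)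
    exact fderiv_fderiv_nonpos_of_submodularOn (isOpen_set_pi finite_univ fun _ _ => isOpen_Ioo)
      hF (fun x hx y hy => hsub x y (hcube hx) (hcube hy)) hz hij
  · intro hH x y hx hy
    refine submodularOn_Icc_of_fderiv_fderiv_nonpos hF₁ hF₂
      (fun z hz i j hij => ?_) hx hy
    have : Nonempty (Fin n) := ⟨i⟩
    exact nonpos_on_Icc_of_nonpos_on_univ_pi_Ioo (hF.continuous_fderiv_fderiv_apply _ _)
      (fun w hw => hH w (pi_univ_Ioo_subset 0 1 hw) i j hij) z hz
end

section
/- A function F : [0,1]ⁿ → ℝ is strong DR-submodular (satisfies diminishing returns along every coordinate with respect to the coordinatewise partial order) if and only if F is continuous submodular and concave along every coordinate. -/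
/-!
Diminishing returns compares increments at comparable points. Chaining increments one coordinate
at a time, from `x ⊓ y` up to `x` and from `y` up to `x ⊔ y`, gives submodularity; along a single
coordinate it gives decreasing increments, hence midpoint concavity, which with continuity yields
concavity. Conversely, submodularity transports an increment at `x` to the point `y` with its
`i`-th coordinate lowered to `x i`, and concavity along `i` moves it on to `y`.
-/

open Set Function

theorem two_mul_midpoint_real (s t : ℝ) : 2 * midpoint ℝ s t = s + t := by
  rw [midpoint_eq_smul_add, smul_eq_mul, ← mul_assoc, mul_invOf_self', one_mul]

theorem min_le_of_midpoint_concave_Icc {φ : ℝ → ℝ} {u v : ℝ} (hc : ContinuousOn φ (Icc u v))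
    (hm : ∀ s ∈ Icc u v, ∀ t ∈ Icc u v, φ s + φ t ≤ 2 * φ (midpoint ℝ s t)) {t : ℝ}
    (ht : t ∈ Icc u v) : min (φ u) (φ v) ≤ φ t := by
  obtain ⟨t₁, ht₁, hmin⟩ := isCompact_Icc.exists_isMinOn ⟨t, ht⟩ hc
  -- `t₀` is the leftmost minimiser; if it were interior, midpoint concavity
  -- would produce a minimiser further left.
  set T := Icc u v ∩ φ ⁻¹' Iic (φ t₁)
  have hT : IsClosed T := hc.preimage_isClosed_of_isClosed isClosed_Icc isClosed_Iic
  have hTbdd : BddBelow T := ⟨u, fun s hs => hs.1.1⟩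
  obtain ⟨⟨hu₀, hv₀⟩, hφ₀ : φ (sInf T) ≤ φ t₁⟩ : sInf T ∈ T :=
    hT.csInf_mem ⟨t₁, ht₁, le_refl (φ t₁)⟩ hTbdd
  set t₀ := sInf T
  have hφt : φ t₀ ≤ φ t := hφ₀.trans (hmin ht)
  rcases hu₀.eq_or_lt with hu | hu₀
  · rw [hu]; exact (min_le_left _ _).trans hφt
  rcases hv₀.eq_or_lt with hv | hv₀
  · rw [← hv]; exact (min_le_right _ _).trans hφt
  exfalso
  set ε := min (t₀ - u) (v - t₀)
  have hε : 0 < ε := lt_min (by linarith) (by linarith)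
  have hl : t₀ - ε ∈ Icc u v := ⟨by linarith [min_le_left (t₀ - u) (v - t₀)], by linarith⟩
  have hr : t₀ + ε ∈ Icc u v := ⟨by linarith, by linarith [min_le_right (t₀ - u) (v - t₀)]⟩
  have hmid := hm _ hl _ hr
  rw [show midpoint ℝ (t₀ - ε) (t₀ + ε) = t₀ by
    linarith [two_mul_midpoint_real (t₀ - ε) (t₀ + ε)]] at hmid
  have hleft : t₀ - ε ∈ T :=
    ⟨hl, show φ (t₀ - ε) ≤ φ t₁ by linarith [show φ t₁ ≤ _ from hmin hr]⟩
  linarith [csInf_le hTbdd hleft]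

theorem concaveOn_of_midpoint {E : Type*} [AddCommGroup E] [Module ℝ E] [TopologicalSpace E]
    [IsTopologicalAddGroup E] [ContinuousSMul ℝ E] {s : Set E} {g : E → ℝ} (hs : Convex ℝ s)
    (hc : ContinuousOn g s) (hm : ∀ x ∈ s, ∀ y ∈ s, g x + g y ≤ 2 * g (midpoint ℝ x y)) :
    ConcaveOn ℝ s g := by
  refine ⟨hs, fun x hx y hy p q hp hq hpq => ?_⟩
  let L := AffineMap.lineMap (k := ℝ) x y
  let ℓ := AffineMap.lineMap (k := ℝ) (g x) (g y)
  have hL : MapsTo L (Icc 0 1) s := fun t ht => hs.lineMap_mem hx hy ht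
  let φ : ℝ → ℝ := fun t => g (L t) - ℓ t
  have hφc : ContinuousOn φ (Icc 0 1) :=
    (hc.comp AffineMap.lineMap_continuous.continuousOn hL).sub
      AffineMap.lineMap_continuous.continuousOn
  have hφm : ∀ s ∈ Icc (0:ℝ) 1, ∀ t ∈ Icc (0:ℝ) 1, φ s + φ t ≤ 2 * φ (midpoint ℝ s t) := by
    intro s hs t ht
    have := hm _ (hL hs) _ (hL ht)
    simp only [φ, AffineMap.map_midpoint]
    linarith [two_mul_midpoint_real (ℓ s) (ℓ t)]
  have key := min_le_of_midpoint_concave_Icc hφc hφm ⟨hq, by linarith⟩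
  have h₀ : φ 0 = 0 := by simp [φ, L, ℓ]
  have h₁ : φ 1 = 0 := by simp [φ, L, ℓ]
  rw [h₀, h₁, min_self] at key
  simp only [φ, L, ℓ, AffineMap.lineMap_apply_module, smul_eq_mul] at key
  obtain rfl : p = 1 - q := by linarith
  rw [smul_eq_mul, smul_eq_mul]
  linarith

-- `a + δ` and `b` are convex combinations of `a` and `b + δ` with swapped weights.
theorem ConcaveOn.sub_le_sub_of_le {s : Set ℝ} {g : ℝ → ℝ} (hg : ConcaveOn ℝ s g) {a b δ : ℝ}
    (ha : a ∈ s) (hb : b + δ ∈ s) (hab : a ≤ b) (hδ : 0 ≤ δ) :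
    g (b + δ) - g b ≤ g (a + δ) - g a := by
  rcases (hab.trans (le_add_of_nonneg_right hδ)).eq_or_lt with h | h
  · obtain rfl : δ = 0 := by linarith
    obtain rfl : a = b := by linarith
    rfl
  set w := (b - a) / (b + δ - a)
  have hw : w * (b + δ - a) = b - a := div_mul_cancel₀ _ (by linarith)
  have hw₀ : 0 ≤ w := div_nonneg (by linarith) (by linarith)
  have hw₁ : w ≤ 1 := (div_le_one (by linarith)).2 (by linarith)
  have h₁ := hg.2 ha hb hw₀ (sub_nonneg.2 hw₁) (by ring)
  have h₂ := hg.2 ha hb (sub_nonneg.2 hw₁) hw₀ (by ring)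
  simp only [smul_eq_mul] at h₁ h₂
  rw [show w * a + (1 - w) * (b + δ) = a + δ by linear_combination -hw] at h₁
  rw [show (1 - w) * a + w * (b + δ) = b by linear_combination hw] at h₂
  linarith

theorem concaveOn_of_sub_le_sub_of_le {s : Set ℝ} {g : ℝ → ℝ} (hs : Convex ℝ s)
    (hc : ContinuousOn g s)
    (h : ∀ a ∈ s, ∀ b δ, b + δ ∈ s → a ≤ b → 0 ≤ δ → g (b + δ) - g b ≤ g (a + δ) - g a) :
    ConcaveOn ℝ s g := by
  refine concaveOn_of_midpoint hs hc fun x hx y hy => ?_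
  wlog hxy : x ≤ y generalizing x y
  · rw [add_comm, midpoint_comm]; exact this y hy x hx (le_of_not_ge hxy)
  have hm := two_mul_midpoint_real x y
  have := h x hx (midpoint ℝ x y) ((y - x) / 2) (by convert hy using 1; linarith) (by linarith)
    (by linarith)
  rw [show midpoint ℝ x y + (y - x) / 2 = y by linarith,
    show x + (y - x) / 2 = midpoint ℝ x y by linarith] at this
  linarith

def IsSubmodularOn {α : Type*} [Lattice α] (F : α → ℝ) (s : Set α) : Prop :=
  ∀ x y, x ∈ s → y ∈ s → F (x ⊔ y) + F (x ⊓ y) ≤ F x + F y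

section Box

variable {ι : Type*} [DecidableEq ι]

def IsStrongDRSubmodularOn (F : (ι → ℝ) → ℝ) (l u : ι → ℝ) : Prop :=
  ∀ i x y, x ∈ Icc l u → y ∈ Icc l u → x ≤ y → ∀ δ : ℝ, 0 ≤ δ → y i + δ ≤ u i →
    F (update y i (y i + δ)) - F y ≤ F (update x i (x i + δ)) - F x

def IsCoordConcaveOn (F : (ι → ℝ) → ℝ) (l u : ι → ℝ) : Prop :=
  ∀ i x, x ∈ Icc l u → ConcaveOn ℝ (Icc (l i) (u i)) fun z => F (update x i z)

variable {F : (ι → ℝ) → ℝ} {l u x y : ι → ℝ}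

theorem update_mem_Icc {i : ι} {z : ℝ} (hx : x ∈ Icc l u) (hz : z ∈ Icc (l i) (u i)) :
    update x i z ∈ Icc l u :=
  ⟨le_update_iff.2 ⟨hz.1, fun j _ => hx.1 j⟩, update_le_iff.2 ⟨hz.2, fun j _ => hx.2 j⟩⟩

theorem update_add_sup_update_eq (hxy : x ≤ y) (i : ι) {δ : ℝ} (hδ : 0 ≤ δ) :
    update x i (x i + δ) ⊔ update y i (x i) = update y i (x i + δ) := by
  ext j
  rcases eq_or_ne j i with rfl | hj
  · simpa using hδ
  · simpa [hj] using hxy j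

theorem update_add_inf_update_eq (hxy : x ≤ y) (i : ι) {δ : ℝ} (hδ : 0 ≤ δ) :
    update x i (x i + δ) ⊓ update y i (x i) = x := by
  ext j
  rcases eq_or_ne j i with rfl | hj
  · simpa using hδ
  · simpa [hj] using hxy j

namespace IsStrongDRSubmodularOn

theorem isCoordConcaveOn (hF : IsStrongDRSubmodularOn F l u) (hc : ContinuousOn F (Icc l u)) :
    IsCoordConcaveOn F l u := by
  intro i x hx
  refine concaveOn_of_sub_le_sub_of_le (convex_Icc _ _)
    (hc.comp (continuous_const.update i continuous_id : Continuous (update x i)).continuousOn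
      fun z hz => update_mem_Icc hx hz) fun a ha b δ hb hab hδ => ?_
  have hb' : b ∈ Icc (l i) (u i) := ⟨ha.1.trans hab, by linarith [hb.2]⟩
  simpa using hF i (update x i a) (update x i b) (update_mem_Icc hx ha) (update_mem_Icc hx hb')
    (update_le_update_iff.2 ⟨hab, fun _ _ => le_rfl⟩) δ hδ (by simpa using hb.2)

theorem isSubmodularOn [Fintype ι] (hF : IsStrongDRSubmodularOn F l u) :
    IsSubmodularOn F (Icc l u) := by
  intro x y hx hy
  suffices key : ∀ s : Finset ι, F (s.piecewise (x ⊔ y) y) - F y ≤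
      F (s.piecewise x (x ⊓ y)) - F (x ⊓ y) by
    have := key Finset.univ
    simp only [Finset.piecewise_univ] at this
    linarith
  intro s
  induction s using Finset.induction_on with
  | empty => simp
  | insert i s hi ih =>
    have hinf : x ⊓ y ∈ Icc l u := ⟨le_inf hx.1 hy.1, inf_le_left.trans hx.2⟩
    have hsup : x ⊔ y ∈ Icc l u := ⟨hx.1.trans le_sup_left, sup_le hx.2 hy.2⟩
    have hstep := hF i (s.piecewise x (x ⊓ y)) (s.piecewise (x ⊔ y) y)
      (Finset.piecewise_mem_Icc_of_mem_of_mem _ hx hinf)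
      (Finset.piecewise_mem_Icc_of_mem_of_mem _ hsup hy)
      (Finset.piecewise_le_piecewise _ le_sup_left inf_le_right) (x i - (x ⊓ y) i)
      (sub_nonneg.2 inf_le_left)
    simp only [Finset.piecewise_eq_of_notMem _ _ _ hi, add_sub_cancel] at hstep
    have hδ : y i + (x i - (x ⊓ y) i) = (x ⊔ y) i := by
      simp only [Pi.inf_apply, Pi.sup_apply]
      linarith [min_add_max (x i) (y i)]
    rw [hδ] at hstep
    rw [Finset.piecewise_insert, Finset.piecewise_insert]
    linarith [hstep (hsup.2 i)]

end IsStrongDRSubmodularOn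

theorem IsSubmodularOn.isStrongDRSubmodularOn (hF : IsSubmodularOn F (Icc l u))
    (hconc : IsCoordConcaveOn F l u) : IsStrongDRSubmodularOn F l u := by
  intro i x y hx hy hxy δ hδ hyδ
  have hsub := hF (update x i (x i + δ)) (update y i (x i))
    (update_mem_Icc hx ⟨by linarith [hx.1 i], by linarith [hxy i]⟩)
    (update_mem_Icc hy ⟨hx.1 i, hx.2 i⟩)
  rw [update_add_sup_update_eq hxy i hδ, update_add_inf_update_eq hxy i hδ] at hsub
  have hincr := (hconc i y hy).sub_le_sub_of_le ⟨hx.1 i, hx.2 i⟩ ⟨by linarith [hy.1 i], hyδ⟩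
    (hxy i) hδ
  simp only [update_eq_self] at hincr
  linarith

theorem isStrongDRSubmodularOn_iff [Fintype ι] (hc : ContinuousOn F (Icc l u)) :
    IsStrongDRSubmodularOn F l u ↔ IsSubmodularOn F (Icc l u) ∧ IsCoordConcaveOn F l u :=
  ⟨fun hF => ⟨hF.isSubmodularOn, hF.isCoordConcaveOn hc⟩,
    fun hF => hF.1.isStrongDRSubmodularOn hF.2⟩

end Box

theorem stmt_5 (n : ℕ) (F : (Fin n → ℝ) → ℝ)
    (hcont : ContinuousOn F (Set.Icc (0:Fin n → ℝ) 1)) :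
    (∀ i : Fin n, ∀ x y : Fin n → ℝ, x ∈ Set.Icc (0:Fin n → ℝ) 1 →
        y ∈ Set.Icc (0:Fin n → ℝ) 1 → x ≤ y → ∀ δ : ℝ, 0 ≤ δ → y i + δ ≤ 1 →
        F (Function.update x i (x i + δ)) - F x
          ≥ F (Function.update y i (y i + δ)) - F y) ↔
    ((∀ x y : Fin n → ℝ, x ∈ Set.Icc (0:Fin n → ℝ) 1 → y ∈ Set.Icc (0:Fin n → ℝ) 1 →
        F x + F y ≥ F (x ⊔ y) + F (x ⊓ y)) ∧
     (∀ i : Fin n, ∀ x : Fin n → ℝ, x ∈ Set.Icc (0:Fin n → ℝ) 1 →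
        ConcaveOn ℝ (Set.Icc (0:ℝ) 1) (fun z => F (Function.update x i z)))) :=
  isStrongDRSubmodularOn_iff hcont
end

section
/- Let F : [0,1]ⁿ → ℝ be twice continuously differentiable with all Hessian entries nonpositive. Fix a coordinate i and X_{-i} ≤ Y_{-i}. Then the function f(z) = (∂F/∂x_i)(z, X_{-i})·(1-z) + (∂F/∂x_i)(z, Y_{-i})·z is monotone nonincreasing on [0,1]. -/
/-! Nonpositive second partials make `G = ∂F/∂x_i` antitone on the box for the coordinatewise
order (mean value theorem along a segment). Hence both `G(z, X_{-i})` and `G(z, Y_{-i})` decrease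
in `z`, and `G(z, Y_{-i}) ≤ G(z, X_{-i})`; moving weight from the first to the second term as `z`
grows can therefore only decrease `f`. -/

open Set

theorem apply_nonpos_of_apply_single_nonpos {ι : Type*} [Fintype ι] [DecidableEq ι]
    (L : (ι → ℝ) →L[ℝ] ℝ) (hL : ∀ j, L (Pi.single j 1) ≤ 0) {v : ι → ℝ} (hv : 0 ≤ v) :
    L v ≤ 0 := by
  rw [← Finset.univ_sum_single v, map_sum]
  refine Finset.sum_nonpos fun j _ => ?_
  rw [← mul_one (v j), ← smul_eq_mul, Pi.single_smul', map_smul, smul_eq_mul]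
  exact mul_nonpos_of_nonneg_of_nonpos (hv j) (hL j)

theorem antitoneOn_of_fderiv_single_nonpos {ι : Type*} [Fintype ι] [DecidableEq ι]
    {G : (ι → ℝ) → ℝ} {s : Set (ι → ℝ)} (hs : Convex ℝ s) (hG : Differentiable ℝ G)
    (hG' : ∀ x ∈ s, ∀ j, fderiv ℝ G x (Pi.single j 1) ≤ 0) : AntitoneOn G s := by
  intro P hP Q hQ hPQ
  obtain ⟨x, hx, hmvt⟩ := domain_mvt (fun x _ => (hG x).hasFDerivAt.hasFDerivWithinAt) hs hP hQ
  have hxs : x ∈ s := hs.segment_subset hP hQ hx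
  have := apply_nonpos_of_apply_single_nonpos _ (hG' x hxs) (sub_nonneg.mpr hPQ)
  linarith

theorem update_mem_Icc_s8 {ι α : Type*} [DecidableEq ι] [Preorder α] {a b x : ι → α}
    (hx : x ∈ Icc a b) (i : ι) {z : α} (hz : z ∈ Icc (a i) (b i)) :
    Function.update x i z ∈ Icc a b :=
  ⟨le_update_iff.mpr ⟨hz.1, fun j _ => hx.1 j⟩, update_le_iff.mpr ⟨hz.2, fun j _ => hx.2 j⟩⟩

theorem stmt_8 (n : ℕ) (F : (Fin n → ℝ) → ℝ) (hF : ContDiff ℝ 2 F)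
    (hHess : ∀ x : Fin n → ℝ, x ∈ Set.Icc (0:Fin n → ℝ) 1 → ∀ i j : Fin n,
      fderiv ℝ (fun w => fderiv ℝ F w (Pi.single i 1)) x (Pi.single j 1) ≤ 0)
    (i : Fin n) (X Y : Fin n → ℝ)
    (hX : X ∈ Set.Icc (0:Fin n → ℝ) 1) (hY : Y ∈ Set.Icc (0:Fin n → ℝ) 1)
    (hXY : ∀ j, j ≠ i → X j ≤ Y j)
    (f : ℝ → ℝ)
    (hf : ∀ z, f z = fderiv ℝ F (Function.update X i z) (Pi.single i 1) * (1 - z)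
                   + fderiv ℝ F (Function.update Y i z) (Pi.single i 1) * z) :
    ∀ z₁ z₂ : ℝ, z₁ ∈ Set.Icc (0:ℝ) 1 → z₂ ∈ Set.Icc (0:ℝ) 1 → z₁ ≤ z₂ →
      f z₂ ≤ f z₁ := by
  intro z₁ z₂ hz₁ hz₂ hz
  set G : (Fin n → ℝ) → ℝ := fun w => fderiv ℝ F w (Pi.single i 1)
  have hG : AntitoneOn G (Icc 0 1) :=
    antitoneOn_of_fderiv_single_nonpos (convex_Icc 0 1)
      (((hF.fderiv_right le_rfl).clm_apply contDiff_const).differentiable one_ne_zero)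
      (hHess · · i)
  have hX₁ := update_mem_Icc_s8 hX i hz₁
  have hY₁ := update_mem_Icc_s8 hY i hz₁
  have hGX : G (Function.update X i z₂) ≤ G (Function.update X i z₁) :=
    hG hX₁ (update_mem_Icc_s8 hX i hz₂) (update_le_update_iff'.mpr hz)
  have hGY : G (Function.update Y i z₂) ≤ G (Function.update Y i z₁) :=
    hG hY₁ (update_mem_Icc_s8 hY i hz₂) (update_le_update_iff'.mpr hz)
  have hGXY : G (Function.update Y i z₁) ≤ G (Function.update X i z₁) :=
    hG hX₁ hY₁ (update_le_update_iff.mpr ⟨le_rfl, hXY⟩)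
  -- f z₁ - f z₂ is (1 - z₂), z₂ and z₂ - z₁ times the gaps in hGX, hGY and hGXY respectively
  rw [hf, hf]
  nlinarith [hz₂.1, hz₂.2]
end

section
/- Let g, h : [0,1] → ℝ be differentiable with g(0)=0, h(1)=0. Suppose h - g is nonincreasing, g is concave, h is concave, and there exists z̃ ∈ [0,1] with α := g'(z̃) ≥ 0, β := -h'(z̃) ≥ 0, and α(1-z̃) = β·z̃. Then for every x* ∈ [0,1]: (1/2)g(z̃) + (1/2)h(z̃) - max(g(x*) - g(z̃), h(x*) - h(z̃)) ≥ 0. -/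
/-!
Write `α = g'(z̃)` and `β = -h'(z̃)`. By concavity, the tangents at `z̃` bound both terms of the
max by the common value `α (1 - z̃) = β z̃`, and evaluating the same tangents at the endpoints
gives `g z̃ ≥ α z̃` and `h z̃ ≥ β (1 - z̃)`. The equilibrium condition makes the product of these
two lower bounds equal to `(β z̃)²`, so AM-GM bounds their average below by `β z̃`.
-/

lemma ConcaveOn.le_add_deriv_mul_sub {S : Set ℝ} {f : ℝ → ℝ} {x z : ℝ} (hf : ConcaveOn ℝ S f)
    (hx : x ∈ S) (hz : z ∈ S) (hd : DifferentiableAt ℝ f z) :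
    f x ≤ f z + deriv f z * (x - z) := by
  rcases lt_trichotomy x z with hxz | rfl | hzx
  · have hslope := hf.deriv_le_slope hx hz hxz hd
    rw [slope_def_field, le_div_iff₀ (sub_pos.2 hxz)] at hslope
    linarith
  · simp
  · have hslope := hf.slope_le_deriv hz hx hzx hd
    rw [slope_def_field, div_le_iff₀ (sub_pos.2 hzx)] at hslope
    linarith

lemma two_mul_le_add_of_mul_eq_sq {a b m : ℝ} (ha : 0 ≤ a) (hb : 0 ≤ b) (hab : a * b = m ^ 2) :
    2 * m ≤ a + b := by
  nlinarith [sq_nonneg (a - b)]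

theorem stmt_10_general (g h : ℝ → ℝ) (hgdiff : Differentiable ℝ g) (hhdiff : Differentiable ℝ h)
    (hg0 : g 0 = 0) (hh1 : h 1 = 0)
    (hgconc : ConcaveOn ℝ (Set.Icc (0:ℝ) 1) g)
    (hhconc : ConcaveOn ℝ (Set.Icc (0:ℝ) 1) h)
    (ztil : ℝ) (hztil : ztil ∈ Set.Icc (0:ℝ) 1)
    (hα : 0 ≤ deriv g ztil) (hβ : 0 ≤ -deriv h ztil)
    (heq : deriv g ztil * (1 - ztil) = -deriv h ztil * ztil) :
    ∀ x ∈ Set.Icc (0:ℝ) 1,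
      (1/2) * g ztil + (1/2) * h ztil - max (g x - g ztil) (h x - h ztil) ≥ 0 := by
  intro x ⟨hx0, hx1⟩
  obtain ⟨hz0, hz1⟩ := hztil
  have tangent_g (y : ℝ) (hy : y ∈ Set.Icc (0:ℝ) 1) :=
    hgconc.le_add_deriv_mul_sub hy ⟨hz0, hz1⟩ (hgdiff ztil)
  have tangent_h (y : ℝ) (hy : y ∈ Set.Icc (0:ℝ) 1) :=
    hhconc.le_add_deriv_mul_sub hy ⟨hz0, hz1⟩ (hhdiff ztil)
  have hgz := tangent_g 0 ⟨le_rfl, zero_le_one⟩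
  have hhz := tangent_h 1 ⟨zero_le_one, le_rfl⟩
  have hgx : g x - g ztil ≤ -deriv h ztil * ztil := calc
    g x - g ztil ≤ deriv g ztil * (x - ztil) := by linarith [tangent_g x ⟨hx0, hx1⟩]
    _ ≤ deriv g ztil * (1 - ztil) := by gcongr
    _ = -deriv h ztil * ztil := heq
  have hhx : h x - h ztil ≤ -deriv h ztil * ztil := calc
    h x - h ztil ≤ -deriv h ztil * (ztil - x) := by linarith [tangent_h x ⟨hx0, hx1⟩]
    _ ≤ -deriv h ztil * ztil := by gcongr; linarith
  have hamgm : 2 * (-deriv h ztil * ztil) ≤ deriv g ztil * ztil + -deriv h ztil * (1 - ztil) :=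
    two_mul_le_add_of_mul_eq_sq (by positivity) (mul_nonneg hβ (by linarith))
      (by linear_combination (-deriv h ztil * ztil) * heq)
  linarith [max_le hgx hhx]

theorem stmt_10 (g h : ℝ → ℝ) (hgdiff : Differentiable ℝ g) (hhdiff : Differentiable ℝ h)
    (hg0 : g 0 = 0) (hh1 : h 1 = 0)
    (hmono : ∀ z₁ z₂ : ℝ, z₁ ∈ Set.Icc (0:ℝ) 1 → z₂ ∈ Set.Icc (0:ℝ) 1 → z₁ ≤ z₂ →
      h z₂ - g z₂ ≤ h z₁ - g z₁)
    (hgconc : ConcaveOn ℝ (Set.Icc (0:ℝ) 1) g)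
    (hhconc : ConcaveOn ℝ (Set.Icc (0:ℝ) 1) h)
    (ztil : ℝ) (hztil : ztil ∈ Set.Icc (0:ℝ) 1)
    (hα : 0 ≤ deriv g ztil) (hβ : 0 ≤ -deriv h ztil)
    (heq : deriv g ztil * (1 - ztil) = -deriv h ztil * ztil) :
    ∀ x ∈ Set.Icc (0:ℝ) 1,
      (1/2) * g ztil + (1/2) * h ztil - max (g x - g ztil) (h x - h ztil) ≥ 0 :=
  stmt_10_general g h hgdiff hhdiff hg0 hh1 hgconc hhconc ztil hztil hα hβ heq
end

section
/- Let F : [0,1]ⁿ → ℝ be continuous submodular. Let ẑ ∈ [0,1]ⁿ, x* ∈ [0,1]ⁿ, and for i ∈ {0,...,n} define O^{(i)} = (ẑ_1,...,ẑ_i, x*_{i+1},...,x*_n), X^{(i)} = (ẑ_1,...,ẑ_i, 0,...,0), Y^{(i)} = (ẑ_1,...,ẑ_i, 1,...,1). If ẑ_i ≥ x*_i, then F(O^{(i-1)}) - F(O^{(i)}) ≤ [F(x*_i, Y^{(i-1)}_{-i}) - F(ẑ_i, Y^{(i-1)}_{-i})]. -/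
/-!
Take `x = O^{(i-1)}` with its `i`-th coordinate raised to `ẑ_i` and `y = Y^{(i-1)}` with its
`i`-th coordinate lowered to `x*_i`. Since `O^{(i-1)} ≤ Y^{(i-1)}` and `x*_i ≤ ẑ_i`, the join
`x ⊔ y` is `Y^{(i-1)}` with `i`-th coordinate `ẑ_i` and the meet `x ⊓ y` is `O^{(i-1)}` itself,
so the inequality is lattice submodularity `F x + F y ≥ F (x ⊔ y) + F (x ⊓ y)` rearranged.
-/

namespace Function

variable {ι α : Type*} [DecidableEq ι] [Lattice α]

theorem update_sup_update_of_le {f g : ι → α} (hfg : f ≤ g) {a b : α} (hab : a ≤ b) (i : ι) :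
    update f i b ⊔ update g i a = update g i b :=
  funext fun j => by
    obtain rfl | hji := eq_or_ne j i
    · simp [hab]
    · simp [update_of_ne hji, hfg j]

theorem update_inf_update_of_le {f g : ι → α} (hfg : f ≤ g) {a b : α} (hab : a ≤ b) (i : ι) :
    update f i b ⊓ update g i a = update f i a :=
  funext fun j => by
    obtain rfl | hji := eq_or_ne j i
    · simp [hab]
    · simp [update_of_ne hji, hfg j]

end Function

open Function in
theorem sub_le_sub_of_submodular_update {ι α : Type*} [DecidableEq ι] [Lattice α]
    {S : Set (ι → α)} {F : (ι → α) → ℝ}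
    (hsub : ∀ x ∈ S, ∀ y ∈ S, F (x ⊔ y) + F (x ⊓ y) ≤ F x + F y)
    {f g : ι → α} (hfg : f ≤ g) {a b : α} (hab : a ≤ b) (i : ι)
    (hf : update f i b ∈ S) (hg : update g i a ∈ S) :
    F (update f i a) - F (update f i b) ≤ F (update g i a) - F (update g i b) := by
  have := hsub _ hf _ hg
  rw [update_sup_update_of_le hfg hab, update_inf_update_of_le hfg hab] at this
  linarith

theorem update_mem_Icc_s11 {ι α : Type*} [DecidableEq ι] [Preorder α] {l u f : ι → α}
    (hf : f ∈ Set.Icc l u) (i : ι) {a : α} (ha : a ∈ Set.Icc (l i) (u i)) :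
    Function.update f i a ∈ Set.Icc l u := by
  rw [← Set.pi_univ_Icc] at hf ⊢
  exact (Set.update_mem_pi_iff_of_mem hf).2 fun _ => ha

theorem ite_mem_Icc {ι α : Type*} [Preorder α] {l u f g : ι → α} (p : ι → Prop) [DecidablePred p]
    (hf : f ∈ Set.Icc l u) (hg : g ∈ Set.Icc l u) :
    (fun j => if p j then f j else g j) ∈ Set.Icc l u := by
  rw [← Set.pi_univ_Icc] at hf hg ⊢
  intro j _
  dsimp only
  split_ifs
  exacts [hf j trivial, hg j trivial]

theorem stmt_11 (n : ℕ) (F : (Fin n → ℝ) → ℝ)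
    (hsub : ∀ x y : Fin n → ℝ, x ∈ Set.Icc (0:Fin n → ℝ) 1 → y ∈ Set.Icc (0:Fin n → ℝ) 1 →
      F x + F y ≥ F (x ⊔ y) + F (x ⊓ y))
    (zhat xstar : Fin n → ℝ)
    (hz : zhat ∈ Set.Icc (0:Fin n → ℝ) 1) (hx : xstar ∈ Set.Icc (0:Fin n → ℝ) 1)
    (i : Fin n) (hge : zhat i ≥ xstar i)
    (Oprev Yprev : Fin n → ℝ)
    (hO : Oprev = fun (j : Fin n) => if (j:ℕ) < (i:ℕ) then zhat j else xstar j)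
    (hYp : Yprev = fun (j : Fin n) => if (j:ℕ) < (i:ℕ) then zhat j else 1) :
    F Oprev - F (Function.update Oprev i (zhat i))
      ≤ F (Function.update Yprev i (xstar i)) - F (Function.update Yprev i (zhat i)) := by
  have hOY : Oprev ≤ Yprev := fun j => by
    simp only [hO, hYp]
    split_ifs
    exacts [le_rfl, hx.2 j]
  have hOi : Function.update Oprev i (xstar i) = Oprev := by
    simp [hO]
  have hOmem : Oprev ∈ Set.Icc (0:Fin n → ℝ) 1 := hO ▸ ite_mem_Icc _ hz hx
  have hYmem : Yprev ∈ Set.Icc (0:Fin n → ℝ) 1 :=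
    hYp ▸ ite_mem_Icc _ hz ⟨zero_le_one, le_rfl⟩
  have key := sub_le_sub_of_submodular_update (fun x hx y hy => hsub x y hx hy) hOY hge i
    (update_mem_Icc_s11 hOmem i ⟨hz.1 i, hz.2 i⟩) (update_mem_Icc_s11 hYmem i ⟨hx.1 i, hx.2 i⟩)
  rwa [hOi] at key
end

section
/- Let F : [0,1]ⁿ → ℝ be continuous submodular. With notation as before, if ẑ_i ≤ x*_i then F(O^{(i-1)}) - F(O^{(i)}) ≤ F(x*_i, X^{(i-1)}_{-i}) - F(ẑ_i, X^{(i-1)}_{-i}), where X^{(i-1)} = (ẑ_1,...,ẑ_{i-1}, 0,...,0) and O^{(j)} = (ẑ_1,...,ẑ_j, x*_{j+1},...,x*_n). -/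
/-!
Both sides are increments of `F` along coordinate `i`, from `ẑ_i` up to `x*_i`. Off coordinate `i`
the base point `X^{(i-1)}` lies below `O^{(i-1)}`, so submodularity, applied to
`(x*_i, X^{(i-1)}_{-i})` and `O^{(i)} = (ẑ_i, O^{(i-1)}_{-i})`, whose join is `O^{(i-1)}` and whose
meet is `(ẑ_i, X^{(i-1)}_{-i})`, compares the two increments.
-/

open Function Set

section Update

variable {ι : Type*} [DecidableEq ι] {α : ι → Type*}

theorem Function.update_mem_Icc [∀ j, Preorder (α j)] {l r x : ∀ j, α j} (hx : x ∈ Icc l r)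
    (i : ι) {a : α i} (ha : a ∈ Icc (l i) (r i)) : update x i a ∈ Icc l r :=
  ⟨le_update_iff.2 ⟨ha.1, fun j _ => hx.1 j⟩, update_le_iff.2 ⟨ha.2, fun j _ => hx.2 j⟩⟩

theorem Function.update_sup_update [∀ j, Lattice (α j)] (x y : ∀ j, α j) (i : ι) (a b : α i) :
    update x i a ⊔ update y i b = update (x ⊔ y) i (a ⊔ b) :=
  funext fun j => apply_update₂ (fun _ => (· ⊔ ·)) x y i a b j

theorem Function.update_inf_update [∀ j, Lattice (α j)] (x y : ∀ j, α j) (i : ι) (a b : α i) :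
    update x i a ⊓ update y i b = update (x ⊓ y) i (a ⊓ b) :=
  funext fun j => apply_update₂ (fun _ => (· ⊓ ·)) x y i a b j

theorem sub_update_le_sub_update_of_submodularOn [∀ j, Lattice (α j)] {S : Set (∀ j, α j)}
    {F : (∀ j, α j) → ℝ} (hF : ∀ x ∈ S, ∀ y ∈ S, F (x ⊔ y) + F (x ⊓ y) ≤ F x + F y)
    {x y : ∀ j, α j} (hxy : x ≤ y) (i : ι) {a b : α i} (hba : b ≤ a)
    (hxa : update x i a ∈ S) (hyb : update y i b ∈ S) :
    F (update y i a) - F (update y i b) ≤ F (update x i a) - F (update x i b) := by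
  have h := hF _ hxa _ hyb
  rw [update_sup_update, update_inf_update, sup_eq_right.2 hxy, inf_eq_left.2 hxy,
    sup_eq_left.2 hba, inf_eq_right.2 hba] at h
  linarith

end Update

theorem stmt_12 (n : ℕ) (F : (Fin n → ℝ) → ℝ)
    (hsub : ∀ x y : Fin n → ℝ, x ∈ Set.Icc (0:Fin n → ℝ) 1 → y ∈ Set.Icc (0:Fin n → ℝ) 1 →
      F x + F y ≥ F (x ⊔ y) + F (x ⊓ y))
    (zhat xstar : Fin n → ℝ)
    (hz : zhat ∈ Set.Icc (0:Fin n → ℝ) 1) (hx : xstar ∈ Set.Icc (0:Fin n → ℝ) 1)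
    (i : Fin n) (hle : zhat i ≤ xstar i)
    (Oprev Xprev : Fin n → ℝ)
    (hO : Oprev = fun (j : Fin n) => if (j:ℕ) < (i:ℕ) then zhat j else xstar j)
    (hXp : Xprev = fun (j : Fin n) => if (j:ℕ) < (i:ℕ) then zhat j else 0) :
    F Oprev - F (Function.update Oprev i (zhat i))
      ≤ F (Function.update Xprev i (xstar i)) - F (Function.update Xprev i (zhat i)) := by
  set below : Set (Fin n) := {j | (j : ℕ) < i}
  have hO' : Oprev = below.piecewise zhat xstar := hO
  have hX' : Xprev = below.piecewise zhat 0 := hXp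
  have hXO : Xprev ≤ Oprev := by
    rw [hO', hX']
    exact piecewise_mono (fun _ _ => le_rfl) fun j _ => hx.1 j
  have hOI : Oprev ∈ Icc (0 : Fin n → ℝ) 1 := hO' ▸ piecewise_mem_Icc' hz hx
  have hXI : Xprev ∈ Icc (0 : Fin n → ℝ) 1 :=
    hX' ▸ piecewise_mem_Icc' hz (left_mem_Icc.2 zero_le_one)
  have hO_update : update Oprev i (xstar i) = Oprev := by
    rw [← update_eq_self i Oprev]
    simp [hO]
  have h := sub_update_le_sub_update_of_submodularOn (S := Icc 0 1)
    (fun x hx y hy => hsub x y hx hy) hXO i hle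
    (update_mem_Icc hXI i ⟨hx.1 i, hx.2 i⟩) (update_mem_Icc hOI i ⟨hz.1 i, hz.2 i⟩)
  rwa [hO_update] at h
end

section
/- Let g, h : [0,1] → ℝ and points P₁ = (g₁,h₁), P₂ = (g₂,h₂) with h₁ - g₁ ≥ h₂ - g₂, λ ∈ [0,1], and V as the two-point mixed-strategy utility V(g',h') = λ[(1/2)(g₁+h₁) - max(g'-g₁, h'-h₁)] + (1-λ)[(1/2)(g₂+h₂) - max(g'-g₂, h'-h₂)]. Then for any (g',h') with h' - g' ≤ h₂ - g₂, V(g',h') ≥ 0 if and only if g' ≤ λ((3/2)g₁ + (1/2)h₁) + (1-λ)((3/2)g₂ + (1/2)h₂). -/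
/-! Since `h' - g' ≤ h₂ - g₂ ≤ h₁ - g₁`, both maxima are attained by their `g`-terms. The utility is
then affine in `g'` with slope `-(lam + (1 - lam)) = -1`, i.e. it equals the threshold minus `g'`,
whatever the weight `lam`. -/

lemma max_sub_eq_left_of_sub_le {g h g' h' : ℝ} (hreg : h' - g' ≤ h - g) :
    max (g' - g) (h' - h) = g' - g :=
  max_eq_left (by linarith)

theorem stmt_15_general (g₁ h₁ g₂ h₂ lam g' h' : ℝ)
    (hP : h₁ - g₁ ≥ h₂ - g₂)
    (hreg : h' - g' ≤ h₂ - g₂) :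
    lam * ((1/2) * (g₁ + h₁) - max (g' - g₁) (h' - h₁))
      + (1 - lam) * ((1/2) * (g₂ + h₂) - max (g' - g₂) (h' - h₂)) ≥ 0
      ↔ g' ≤ lam * ((3/2) * g₁ + (1/2) * h₁) + (1 - lam) * ((3/2) * g₂ + (1/2) * h₂) := by
  rw [max_sub_eq_left_of_sub_le (hreg.trans hP), max_sub_eq_left_of_sub_le hreg]
  constructor <;> intro h <;> linarith

theorem stmt_15 (g₁ h₁ g₂ h₂ lam g' h' : ℝ)
    (hP : h₁ - g₁ ≥ h₂ - g₂) (hlam : lam ∈ Set.Icc (0:ℝ) 1)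
    (hreg : h' - g' ≤ h₂ - g₂) :
    lam * ((1/2) * (g₁ + h₁) - max (g' - g₁) (h' - h₁))
      + (1 - lam) * ((1/2) * (g₂ + h₂) - max (g' - g₂) (h' - h₂)) ≥ 0
      ↔ g' ≤ lam * ((3/2) * g₁ + (1/2) * h₁) + (1 - lam) * ((3/2) * g₂ + (1/2) * h₂) :=
  stmt_15_general g₁ h₁ g₂ h₂ lam g' h' hP hreg
end
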